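/- arXiv:2103.05446 — 2 statements merged into one kernel-verified Lean document; each statement's English description precedes it below -/
import Mathlib

section
/- For every σ > 0 and constants K, T ∈ ℝ, the functions r(t) = (σ/(3√6))·(T−t)² and φ(t) = √2·ln(T−t) + K satisfy, for all t < T, the equation r̈(t) = r(t)·(φ̇(t))². -/
open Real

lemma hasDerivAt_const_mul_sub_sq (c T t : ℝ) :
    HasDerivAt (fun s => c * (T - s) ^ 2) (-(2 * c * (T - t))) t :=
  ((((hasDerivAt_id' t).const_sub T).fun_pow 2).const_mul c).congr_deriv (by ring)

lemma deriv_deriv_const_mul_sub_sq (c T t : ℝ) :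
    deriv (deriv fun s => c * (T - s) ^ 2) t = 2 * c := by
  have hd : deriv (fun s => c * (T - s) ^ 2) = fun s => -(2 * c * (T - s)) :=
    funext fun s => (hasDerivAt_const_mul_sub_sq c T s).deriv
  rw [hd]
  exact ((((hasDerivAt_id' t).const_sub T).const_mul (2 * c)).fun_neg.congr_deriv (by ring)).deriv

lemma deriv_const_mul_log_sub_add (a K T : ℝ) {t : ℝ} (ht : t ≠ T) :
    deriv (fun s => a * Real.log (T - s) + K) t = -(a / (T - t)) :=
  ((((hasDerivAt_id' t).const_sub T).log (sub_ne_zero.mpr ht.symm)).const_mul a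
    |>.add_const K).congr_deriv (by ring) |>.deriv

theorem stmt_0_general (σ K T : ℝ)
    (r : ℝ → ℝ) (hr : ∀ t, r t = σ / (3 * Real.sqrt 6) * (T - t) ^ 2)
    (φ : ℝ → ℝ) (hφ : ∀ t, φ t = Real.sqrt 2 * Real.log (T - t) + K) :
    ∀ t < T, deriv (deriv r) t = r t * (deriv φ t) ^ 2 := by
  intro t ht
  rw [funext hr, funext hφ, deriv_deriv_const_mul_sub_sq,
    deriv_const_mul_log_sub_add _ _ _ ht.ne, neg_sq, div_pow, Real.sq_sqrt zero_le_two]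
  have hT : T - t ≠ 0 := sub_ne_zero.mpr ht.ne'
  field_simp

theorem stmt_0 (σ K T : ℝ) (hσ : 0 < σ)
    (r : ℝ → ℝ) (hr : ∀ t, r t = σ / (3 * Real.sqrt 6) * (T - t) ^ 2)
    (φ : ℝ → ℝ) (hφ : ∀ t, φ t = Real.sqrt 2 * Real.log (T - t) + K) :
    ∀ t < T, deriv (deriv r) t = r t * (deriv φ t) ^ 2 :=
  stmt_0_general σ K T r hr φ hφ
end

section
/- Suppose (r, φ) solves the system r̈ = r φ̇², r φ̈ + 2ṙφ̇ = −σ r φ̇/√(ṙ² + (rφ̇)²) on an interval, with r > 0 and ṙ² + (rφ̇)² > 0. Then the kinetic energy E(t) = ½(ṙ(t)² + (r(t)φ̇(t))²) is nonincreasing, with Ė(t) = −σ·(r(t)φ̇(t))²/√(ṙ(t)² + (r(t)φ̇(t))²) ≤ 0. -/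
/-!
Along any planar motion in polar coordinates, the kinetic energy
`E = ½ (ṙ² + (r φ̇)²)` satisfies `Ė = ṙ (r̈ - r φ̇²) + r φ̇ (r φ̈ + 2 ṙ φ̇)`: radial velocity times
radial acceleration plus transversal velocity times transversal acceleration. The equations of
motion make the radial acceleration vanish and the transversal one equal to `-σ r φ̇ / |v|`, so
`Ė = -σ (r φ̇)² / |v| ≤ 0`, and the mean value theorem makes `E` nonincreasing.
-/

open Real

theorem hasDerivAt_polar_kineticEnergy {r v ω : ℝ → ℝ} {a b t : ℝ}
    (hr : HasDerivAt r (v t) t) (hv : HasDerivAt v a t) (hω : HasDerivAt ω b t) :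
    HasDerivAt (fun s ↦ (1 / 2) * (v s ^ 2 + (r s * ω s) ^ 2))
      (v t * (a - r t * ω t ^ 2) + r t * ω t * (r t * b + 2 * v t * ω t)) t :=
  (((hv.fun_pow 2).fun_add ((hr.fun_mul hω).fun_pow 2)).const_mul (1 / 2)).congr_deriv (by ring)

theorem antitoneOn_of_hasDerivAt_nonpos {D : Set ℝ} (hD : Convex ℝ D) {f f' : ℝ → ℝ}
    (hf : ∀ x ∈ D, HasDerivAt f (f' x) x) (hf' : ∀ x ∈ D, f' x ≤ 0) : AntitoneOn f D :=
  antitoneOn_of_hasDerivWithinAt_nonpos hD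
    (fun x hx ↦ (hf x hx).continuousAt.continuousWithinAt)
    (fun x hx ↦ (hf x (interior_subset hx)).hasDerivWithinAt)
    (fun x hx ↦ hf' x (interior_subset hx))

theorem neg_mul_sq_div_sqrt_nonpos {σ : ℝ} (hσ : 0 ≤ σ) (x y : ℝ) :
    -σ * x ^ 2 / √y ≤ 0 :=
  div_nonpos_of_nonpos_of_nonneg (by nlinarith [sq_nonneg x]) (sqrt_nonneg y)

theorem stmt_12_general (σ : ℝ) (hσ : 0 < σ) (I : Set ℝ)
    (r φ : ℝ → ℝ)
    (hr2 : ∀ t ∈ I, DifferentiableAt ℝ r t ∧ DifferentiableAt ℝ (deriv r) t)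
    (hφ2 : ∀ t ∈ I, DifferentiableAt ℝ φ t ∧ DifferentiableAt ℝ (deriv φ) t)
    (heq1 : ∀ t ∈ I, deriv (deriv r) t = r t * (deriv φ t) ^ 2)
    (heq2 : ∀ t ∈ I, r t * deriv (deriv φ) t + 2 * deriv r t * deriv φ t =
      -σ * (r t * deriv φ t) / Real.sqrt ((deriv r t) ^ 2 + (r t * deriv φ t) ^ 2))
    (E : ℝ → ℝ)
    (hE : ∀ t, E t = (1 / 2) * ((deriv r t) ^ 2 + (r t * deriv φ t) ^ 2)) :
    (∀ t ∈ I, deriv E t =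
      -σ * (r t * deriv φ t) ^ 2 /
        Real.sqrt ((deriv r t) ^ 2 + (r t * deriv φ t) ^ 2) ∧ deriv E t ≤ 0) ∧
    ∀ s ∈ I, ∀ t ∈ I, s ≤ t → Set.Icc s t ⊆ I → E t ≤ E s := by
  have hE' : ∀ t ∈ I, HasDerivAt E
      (-σ * (r t * deriv φ t) ^ 2 / √((deriv r t) ^ 2 + (r t * deriv φ t) ^ 2)) t := by
    intro t ht
    have h := hasDerivAt_polar_kineticEnergy (hr2 t ht).1.hasDerivAt (hr2 t ht).2.hasDerivAt
      (hφ2 t ht).2.hasDerivAt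
    rw [heq1 t ht, heq2 t ht, ← funext hE] at h
    exact h.congr_deriv (by ring)
  have hdiss := fun t ↦ neg_mul_sq_div_sqrt_nonpos hσ.le (r t * deriv φ t)
    ((deriv r t) ^ 2 + (r t * deriv φ t) ^ 2)
  refine ⟨fun t ht ↦ ⟨(hE' t ht).deriv, (hE' t ht).deriv ▸ hdiss t⟩, fun s _ t _ hst hsub ↦ ?_⟩
  exact antitoneOn_of_hasDerivAt_nonpos (convex_Icc s t) (fun x hx ↦ hE' x (hsub hx))
    (fun x _ ↦ hdiss x) (Set.left_mem_Icc.mpr hst) (Set.right_mem_Icc.mpr hst) hst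

theorem stmt_12 (σ : ℝ) (hσ : 0 < σ) (I : Set ℝ) (hI : IsOpen I)
    (r φ : ℝ → ℝ)
    (hr2 : ∀ t ∈ I, DifferentiableAt ℝ r t ∧ DifferentiableAt ℝ (deriv r) t)
    (hφ2 : ∀ t ∈ I, DifferentiableAt ℝ φ t ∧ DifferentiableAt ℝ (deriv φ) t)
    (hrpos : ∀ t ∈ I, 0 < r t)
    (hspeed : ∀ t ∈ I, 0 < (deriv r t) ^ 2 + (r t * deriv φ t) ^ 2)
    (heq1 : ∀ t ∈ I, deriv (deriv r) t = r t * (deriv φ t) ^ 2)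
    (heq2 : ∀ t ∈ I, r t * deriv (deriv φ) t + 2 * deriv r t * deriv φ t =
      -σ * (r t * deriv φ t) / Real.sqrt ((deriv r t) ^ 2 + (r t * deriv φ t) ^ 2))
    (E : ℝ → ℝ)
    (hE : ∀ t, E t = (1 / 2) * ((deriv r t) ^ 2 + (r t * deriv φ t) ^ 2)) :
    (∀ t ∈ I, deriv E t =
      -σ * (r t * deriv φ t) ^ 2 /
        Real.sqrt ((deriv r t) ^ 2 + (r t * deriv φ t) ^ 2) ∧ deriv E t ≤ 0) ∧
    ∀ s ∈ I, ∀ t ∈ I, s ≤ t → Set.Icc s t ⊆ I → E t ≤ E s :=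
  stmt_12_general σ hσ I r φ hr2 hφ2 heq1 heq2 E hE
end
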